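/- arXiv:1501.01368 — 3 statements merged into one kernel-verified Lean document; each statement's English description precedes it below -/
import Mathlib

section
/- Let S be a type, f : S ≃ S a bijection, K ⊆ S a set with f(K) = K, and B₀, B₁, B₂, B₃ ⊆ S sets with K ⊆ B₀ ∪ B₁ ∪ B₂ ∪ B₃. Assume that for every z ∈ K: (i) z ∉ B₀ ∩ B₁, z ∉ B₀ ∩ B₂, and z ∉ B₁ ∩ B₃; (ii) if z ∈ B₁ then f(z) ∉ B₁ ∪ B₂; (iii) if z ∈ B₃ then f(z) ∉ B₀ ∪ B₃; (iv) if z ∈ B₀ \ B₃ then f(z) ∉ B₁; (v) if z ∈ B₃ \ (B₀ ∪ B₂) then f(z) ∉ B₂; (vi) if z ∈ B₂ \ (B₁ ∪ B₃) then f(z) ∉ B₀ ∪ B₁; (vii) if z ∈ B₁ \ B₂ then f(z) ∉ B₃. Then for every z ∈ K there exists a bi-infinite sequence (i_n)_{n ∈ ℤ} with values in {0,1,2,3} such that (i_n, i_{n+1}) ∈ 𝔗⁺ for all n ∈ ℤ and fⁿ(z) ∈ B_{i_n} for all n ∈ ℤ (where fⁿ denotes the n-th iterate for n ≥ 0 and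 the |n|-th iterate of the inverse for n < 0). -/
/-- Admissible transitions `𝔗⁺` for the 4-box system. -/
def TplusFin : Set (Fin 4 × Fin 4) :=
  {(0, 0), (0, 2), (0, 3), (1, 0), (2, 2), (2, 3), (3, 1)}

/-!
Write `L n` for the set of boxes containing `fⁿ z`. By the covering, conditions (ii)–(vii) give
every box `b ∈ L (n + 1)` a `𝔗⁺`-predecessor in `L n`, so admissible itineraries can always be
continued backwards, giving admissible paths on every finite window `[-N, N]`. Compactness of
`ℤ → Fin 4` glues these into a bi-infinite admissible itinerary.
-/

section IntPath

variable {α : Type*} {T : Set (α × α)} {L : ℤ → Set α}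

theorem exists_path_lt_of_exists_pred (hpred : ∀ n, ∀ b ∈ L (n + 1), ∃ a ∈ L n, (a, b) ∈ T)
    {M : ℤ} {b : α} (hb : b ∈ L M) :
    ∃ i : ℤ → α, ∀ n < M, i n ∈ L n ∧ (i n, i (n + 1)) ∈ T := by
  choose! p hpL hpT using hpred
  let x : ℕ → α := fun k => Nat.rec b (fun k a => p (M - (k + 1)) a) k
  have hx (k : ℕ) : x k ∈ L (M - k) := by
    induction k with
    | zero => simpa [x] using hb
    | succ k ih => exact hpL _ _ (by convert ih using 2; push_cast; ring)
  refine ⟨fun n => x (M - n).toNat, fun n hn => ?_⟩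
  obtain ⟨k, rfl⟩ : ∃ k : ℕ, n = M - (k + 1) := ⟨(M - n - 1).toNat, by omega⟩
  have hk : M - (k + 1) + 1 = M - k := by ring
  have hxk : x k ∈ L (M - (k + 1) + 1) := hk ▸ hx k
  simp only [hk, sub_sub_cancel, Int.toNat_natCast]
  rw [← Nat.cast_succ, Int.toNat_natCast]
  exact ⟨hpL _ _ hxk, hpT _ _ hxk⟩

theorem exists_path_of_exists_pred [Finite α] (hne : ∀ n, (L n).Nonempty)
    (hpred : ∀ n, ∀ b ∈ L (n + 1), ∃ a ∈ L n, (a, b) ∈ T) :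
    ∃ i : ℤ → α, (∀ n, (i n, i (n + 1)) ∈ T) ∧ ∀ n, i n ∈ L n := by
  let _ : TopologicalSpace α := ⊥
  have : DiscreteTopology α := ⟨rfl⟩
  let P : ℕ → Set (ℤ → α) := fun N =>
    {i | ∀ n : ℤ, |n| ≤ N → i n ∈ L n ∧ (i n, i (n + 1)) ∈ T}
  have hP_closed (N : ℕ) : IsClosed (P N) := by
    simp only [P, Set.ofPred_forall]
    refine isClosed_iInter fun n => isClosed_iInter fun _ => ?_
    exact IsClosed.preimage (f := fun i : ℤ → α => (i n, i (n + 1))) (by fun_prop)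
      (isClosed_discrete {p : α × α | p.1 ∈ L n ∧ p ∈ T})
  have hP_anti (N : ℕ) : P (N + 1) ⊆ P N := fun i hi n hn => hi n (by push_cast; linarith)
  have hP_ne (N : ℕ) : (P N).Nonempty := by
    obtain ⟨b, hb⟩ := hne (N + 1)
    obtain ⟨i, hi⟩ := exists_path_lt_of_exists_pred hpred hb
    exact ⟨i, fun n hn => hi n (by linarith [le_abs_self n])⟩
  obtain ⟨i, hi⟩ := IsCompact.nonempty_iInter_of_sequence_nonempty_isCompact_isClosed P hP_anti
    hP_ne (hP_closed 0).isCompact hP_closed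
  have hiP (n : ℤ) := Set.mem_iInter.mp hi n.natAbs n (Int.abs_eq_natAbs n).le
  exact ⟨i, fun n => (hiP n).2, fun n => (hiP n).1⟩

end IntPath

theorem exists_tplusFin_pred {S : Type*} {B : Fin 4 → Set S} {y w : S}
    (hy : y ∈ B 0 ∪ B 1 ∪ B 2 ∪ B 3)
    (hii : y ∈ B 1 → w ∉ B 1 ∪ B 2) (hiii : y ∈ B 3 → w ∉ B 0 ∪ B 3)
    (hiv : y ∈ B 0 \ B 3 → w ∉ B 1) (hv : y ∈ B 3 \ (B 0 ∪ B 2) → w ∉ B 2)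
    (hvi : y ∈ B 2 \ (B 1 ∪ B 3) → w ∉ B 0 ∪ B 1) (hvii : y ∈ B 1 \ B 2 → w ∉ B 3)
    {b : Fin 4} (hb : w ∈ B b) : ∃ a, y ∈ B a ∧ (a, b) ∈ TplusFin := by
  fin_cases b
  · obtain h | h : y ∈ B 0 ∨ y ∈ B 1 := by grind
    exacts [⟨0, h, by simp [TplusFin]⟩, ⟨1, h, by simp [TplusFin]⟩]
  · exact ⟨3, by grind, by simp [TplusFin]⟩
  · obtain h | h : y ∈ B 0 ∨ y ∈ B 2 := by grind
    exacts [⟨0, h, by simp [TplusFin]⟩, ⟨2, h, by simp [TplusFin]⟩]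
  · obtain h | h : y ∈ B 0 ∨ y ∈ B 2 := by grind
    exacts [⟨0, h, by simp [TplusFin]⟩, ⟨2, h, by simp [TplusFin]⟩]

open Pointwise in
theorem Equiv.Perm.zpow_apply_mem_of_image_eq {S : Type*} {f : Equiv.Perm S} {K : Set S}
    (hK : f '' K = K) (n : ℤ) {z : S} (hz : z ∈ K) : (f ^ n) z ∈ K := by
  have hf : f ∈ MulAction.stabilizer (Equiv.Perm S) K := hK
  rw [← MulAction.mem_stabilizer_iff.mp (zpow_mem hf n)]
  exact Set.smul_mem_smul_set hz

theorem biinfinite_itinerary_plus_general {S : Type*} (f : Equiv.Perm S) (K : Set S)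
    (B : Fin 4 → Set S)
    (hK : (⇑f) '' K = K)
    (hcov : K ⊆ B 0 ∪ B 1 ∪ B 2 ∪ B 3)
    (hii : ∀ z ∈ K, z ∈ B 1 → f z ∉ B 1 ∪ B 2)
    (hiii : ∀ z ∈ K, z ∈ B 3 → f z ∉ B 0 ∪ B 3)
    (hiv : ∀ z ∈ K, z ∈ B 0 \ B 3 → f z ∉ B 1)
    (hv : ∀ z ∈ K, z ∈ B 3 \ (B 0 ∪ B 2) → f z ∉ B 2)
    (hvi : ∀ z ∈ K, z ∈ B 2 \ (B 1 ∪ B 3) → f z ∉ B 0 ∪ B 1)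
    (hvii : ∀ z ∈ K, z ∈ B 1 \ B 2 → f z ∉ B 3) :
    ∀ z ∈ K, ∃ i : ℤ → Fin 4,
      (∀ n : ℤ, (i n, i (n + 1)) ∈ TplusFin) ∧
      (∀ n : ℤ, (f ^ n) z ∈ B (i n)) := by
  intro z hz
  have horbit (n : ℤ) : (f ^ n) z ∈ K := f.zpow_apply_mem_of_image_eq hK n hz
  refine exists_path_of_exists_pred (L := fun n => {j | (f ^ n) z ∈ B j}) (fun n => ?_) ?_
  · obtain ((h | h) | h) | h := hcov (horbit n)
    exacts [⟨0, h⟩, ⟨1, h⟩, ⟨2, h⟩, ⟨3, h⟩]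
  · intro n b hb
    have hstep : (f ^ (n + 1)) z = f ((f ^ n) z) := by
      rw [add_comm, zpow_one_add, Equiv.Perm.mul_apply]
    have hy := horbit n
    exact exists_tplusFin_pred (hcov hy) (hii _ hy) (hiii _ hy) (hiv _ hy) (hv _ hy) (hvi _ hy)
      (hvii _ hy) (hstep ▸ hb)

/-- Under the hypotheses of Numerical Check B, every point of the invariant set `K`
admits a bi-infinite itinerary through the boxes that is admissible with respect to
`𝔗⁺` (Proposition 3.2 of the paper, abstract form). -/
theorem biinfinite_itinerary_plus {S : Type*} (f : Equiv.Perm S) (K : Set S)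
    (B : Fin 4 → Set S)
    (hK : (⇑f) '' K = K)
    (hcov : K ⊆ B 0 ∪ B 1 ∪ B 2 ∪ B 3)
    (hi : ∀ z ∈ K, z ∉ B 0 ∩ B 1 ∧ z ∉ B 0 ∩ B 2 ∧ z ∉ B 1 ∩ B 3)
    (hii : ∀ z ∈ K, z ∈ B 1 → f z ∉ B 1 ∪ B 2)
    (hiii : ∀ z ∈ K, z ∈ B 3 → f z ∉ B 0 ∪ B 3)
    (hiv : ∀ z ∈ K, z ∈ B 0 \ B 3 → f z ∉ B 1)
    (hv : ∀ z ∈ K, z ∈ B 3 \ (B 0 ∪ B 2) → f z ∉ B 2)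
    (hvi : ∀ z ∈ K, z ∈ B 2 \ (B 1 ∪ B 3) → f z ∉ B 0 ∪ B 1)
    (hvii : ∀ z ∈ K, z ∈ B 1 \ B 2 → f z ∉ B 3) :
    ∀ z ∈ K, ∃ i : ℤ → Fin 4,
      (∀ n : ℤ, (i n, i (n + 1)) ∈ TplusFin) ∧
      (∀ n : ℤ, (f ^ n) z ∈ B (i n)) :=
  biinfinite_itinerary_plus_general f K B hK hcov hii hiii hiv hv hvi hvii
end

section
/- Let S be a type, f : S → S a function, K ⊆ S a set with f(K) ⊆ K, and B₀, B₁, B₂, B₃, B₄ ⊆ S sets with K ⊆ B₀ ∪ B₁ ∪ B₂ ∪ B₃ ∪ B₄. Assume that for every z ∈ K: (i) z ∉ B_i ∩ B_j for (i,j) ∈ {(0,1), (0,3), (0,4), (1,2), (1,4), (2,3)}; (ii) if z ∈ B₀ ∪ B₁ then f(z) ∉ B₁ ∪ B₃; (iii) if z ∈ B₂ ∪ B₃ then f(z) ∉ B₀ ∪ B₁; (iv) if z ∈ B₄ then f(z) ∉ B₀ ∪ B₂; (v) if z ∈ B₀ \ B₂ then f(z) ∉ B₄; (vi) if z ∈ B₁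 \ B₃ then f(z) ∉ B₄; (vii) if z ∈ B₂ \ (B₀ ∪ B₄) then f(z) ∉ B₂ ∪ B₃; (viii) if z ∈ B₃ \ (B₁ ∪ B₄) then f(z) ∉ B₂ ∪ B₃; (ix) if z ∈ B₄ \ (B₂ ∪ B₃) then f(z) ∉ B₄. Then for every z ∈ K, writing I(w) = {i ∈ {0,1,2,3,4} : w ∈ B_i}, the pair (I(z), I(f(z))) is one of the following 23 pairs: ({0},{0}), ({0},{0,2}), ({0},{2}), ({0,2},{2}), ({0,2},{2,4}), ({0,2},{4}), ({2},{4}), ({2,4},{3}), ({2,4},{3,4}), ({2,4},{4}), ({4},{1}), ({4},{1,3}), ({4},{3}), ({3,4},{3}), ({3,4},{3,4}), ({3,4},{4}), ({3},{4}), ({1,3},{2}), ({1,3},{2,4}), ({1,3},{4}), ({1},{0}), ({1},{0,2}), ({1},{2}). -/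
/-- The 23 allowed transitions between box-intersection patterns (5-box case). -/
def allowedPatternsMinus : Set (Set (Fin 5) × Set (Fin 5)) :=
  {({0}, {0}), ({0}, {0, 2}), ({0}, {2}),
   ({0, 2}, {2}), ({0, 2}, {2, 4}), ({0, 2}, {4}),
   ({2}, {4}), ({2, 4}, {3}), ({2, 4}, {3, 4}), ({2, 4}, {4}),
   ({4}, {1}), ({4}, {1, 3}), ({4}, {3}),
   ({3, 4}, {3}), ({3, 4}, {3, 4}), ({3, 4}, {4}), ({3}, {4}),
   ({1, 3}, {2}), ({1, 3}, {2, 4}), ({1, 3}, {4}),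
   ({1}, {0}), ({1}, {0, 2}), ({1}, {2})}

/-- Expand a universal quantifier over `Fin 5` into a five-fold conjunction. -/
lemma forall_fin5' (p : Fin 5 → Prop) : (∀ i, p i) ↔ p 0 ∧ p 1 ∧ p 2 ∧ p 3 ∧ p 4 :=
  ⟨fun h => ⟨h 0, h 1, h 2, h 3, h 4⟩,
   by rintro ⟨h0, h1, h2, h3, h4⟩ i; fin_cases i <;> assumption⟩

/-- Under constraints (i) and coverage, a point is in exactly one of nine states. -/
lemma nine_states {S : Type*} (B : Fin 5 → Set S) (w : S)
    (cov : (((w ∈ B 0 ∨ w ∈ B 1) ∨ w ∈ B 2) ∨ w ∈ B 3) ∨ w ∈ B 4)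
    (h01 : ¬(w ∈ B 0 ∧ w ∈ B 1)) (h03 : ¬(w ∈ B 0 ∧ w ∈ B 3))
    (h04 : ¬(w ∈ B 0 ∧ w ∈ B 4)) (h12 : ¬(w ∈ B 1 ∧ w ∈ B 2))
    (h14 : ¬(w ∈ B 1 ∧ w ∈ B 4)) (h23 : ¬(w ∈ B 2 ∧ w ∈ B 3)) :
    (w ∈ B 0 ∧ w ∉ B 1 ∧ w ∉ B 2 ∧ w ∉ B 3 ∧ w ∉ B 4) ∨
    (w ∉ B 0 ∧ w ∈ B 1 ∧ w ∉ B 2 ∧ w ∉ B 3 ∧ w ∉ B 4) ∨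
    (w ∉ B 0 ∧ w ∉ B 1 ∧ w ∈ B 2 ∧ w ∉ B 3 ∧ w ∉ B 4) ∨
    (w ∉ B 0 ∧ w ∉ B 1 ∧ w ∉ B 2 ∧ w ∈ B 3 ∧ w ∉ B 4) ∨
    (w ∉ B 0 ∧ w ∉ B 1 ∧ w ∉ B 2 ∧ w ∉ B 3 ∧ w ∈ B 4) ∨
    (w ∈ B 0 ∧ w ∉ B 1 ∧ w ∈ B 2 ∧ w ∉ B 3 ∧ w ∉ B 4) ∨
    (w ∉ B 0 ∧ w ∈ B 1 ∧ w ∉ B 2 ∧ w ∈ B 3 ∧ w ∉ B 4) ∨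
    (w ∉ B 0 ∧ w ∉ B 1 ∧ w ∈ B 2 ∧ w ∉ B 3 ∧ w ∈ B 4) ∨
    (w ∉ B 0 ∧ w ∉ B 1 ∧ w ∉ B 2 ∧ w ∈ B 3 ∧ w ∈ B 4) := by
  by_cases c0 : w ∈ B 0 <;> by_cases c1 : w ∈ B 1 <;> by_cases c2 : w ∈ B 2 <;>
    by_cases c3 : w ∈ B 3 <;> by_cases c4 : w ∈ B 4 <;> simp_all

set_option maxHeartbeats 2000000 in
/-- Under the hypotheses of Numerical Check B′, for every `z ∈ K` the pair of
box-intersection patterns `(I(z), I(f z))` is one of the 23 allowed transitions. -/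
theorem pattern_transition_minus {S : Type*} (f : S → S) (K : Set S) (B : Fin 5 → Set S)
    (hK : Set.MapsTo f K K)
    (hcov : K ⊆ B 0 ∪ B 1 ∪ B 2 ∪ B 3 ∪ B 4)
    (hi : ∀ z ∈ K, z ∉ B 0 ∩ B 1 ∧ z ∉ B 0 ∩ B 3 ∧ z ∉ B 0 ∩ B 4 ∧
      z ∉ B 1 ∩ B 2 ∧ z ∉ B 1 ∩ B 4 ∧ z ∉ B 2 ∩ B 3)
    (hii : ∀ z ∈ K, z ∈ B 0 ∪ B 1 → f z ∉ B 1 ∪ B 3)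
    (hiii : ∀ z ∈ K, z ∈ B 2 ∪ B 3 → f z ∉ B 0 ∪ B 1)
    (hiv : ∀ z ∈ K, z ∈ B 4 → f z ∉ B 0 ∪ B 2)
    (hv : ∀ z ∈ K, z ∈ B 0 \ B 2 → f z ∉ B 4)
    (hvi : ∀ z ∈ K, z ∈ B 1 \ B 3 → f z ∉ B 4)
    (hvii : ∀ z ∈ K, z ∈ B 2 \ (B 0 ∪ B 4) → f z ∉ B 2 ∪ B 3)
    (hviii : ∀ z ∈ K, z ∈ B 3 \ (B 1 ∪ B 4) → f z ∉ B 2 ∪ B 3)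
    (hix : ∀ z ∈ K, z ∈ B 4 \ (B 2 ∪ B 3) → f z ∉ B 4) :
    ∀ z ∈ K,
      (({i : Fin 5 | z ∈ B i}, {i : Fin 5 | f z ∈ B i}) :
        Set (Fin 5) × Set (Fin 5)) ∈ allowedPatternsMinus := by
  intro z hz
  have hfz := hK hz
  obtain ⟨h01, h03, h04, h12, h14, h23⟩ := hi z hz
  obtain ⟨g01, g03, g04, g12, g14, g23⟩ := hi _ hfz
  have cov := hcov hz
  have covf := hcov hfz
  have H2 := hii z hz
  have H3 := hiii z hz
  have H4 := hiv z hz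
  have H5 := hv z hz
  have H6 := hvi z hz
  have H7 := hvii z hz
  have H8 := hviii z hz
  have H9 := hix z hz
  simp only [Set.mem_union, Set.mem_diff, Set.mem_inter_iff, not_and, not_or]
    at h01 h03 h04 h12 h14 h23 g01 g03 g04 g12 g14 g23 cov covf H2 H3 H4 H5 H6 H7 H8 H9
  have hzs := nine_states B z cov (fun h => h01 h.1 h.2) (fun h => h03 h.1 h.2)
    (fun h => h04 h.1 h.2) (fun h => h12 h.1 h.2) (fun h => h14 h.1 h.2) (fun h => h23 h.1 h.2)
  have hfs := nine_states B (f z) covf (fun h => g01 h.1 h.2) (fun h => g03 h.1 h.2)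
    (fun h => g04 h.1 h.2) (fun h => g12 h.1 h.2) (fun h => g14 h.1 h.2) (fun h => g23 h.1 h.2)
  clear hK hcov hi hii hiii hiv hv hvi hvii hviii hix hz hfz cov covf h01 h03 h04 h12 h14 h23 g01 g03 g04 g12 g14 g23
  rcases hzs with ⟨a0,a1,a2,a3,a4⟩|⟨a0,a1,a2,a3,a4⟩|⟨a0,a1,a2,a3,a4⟩|⟨a0,a1,a2,a3,a4⟩|
    ⟨a0,a1,a2,a3,a4⟩|⟨a0,a1,a2,a3,a4⟩|⟨a0,a1,a2,a3,a4⟩|⟨a0,a1,a2,a3,a4⟩|⟨a0,a1,a2,a3,a4⟩ <;>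
  rcases hfs with ⟨b0,b1,b2,b3,b4⟩|⟨b0,b1,b2,b3,b4⟩|⟨b0,b1,b2,b3,b4⟩|⟨b0,b1,b2,b3,b4⟩|
    ⟨b0,b1,b2,b3,b4⟩|⟨b0,b1,b2,b3,b4⟩|⟨b0,b1,b2,b3,b4⟩|⟨b0,b1,b2,b3,b4⟩|⟨b0,b1,b2,b3,b4⟩
  · have e1 : {i : Fin 5 | z ∈ B i} = ({0} : Set (Fin 5)) := by
      ext i; fin_cases i <;> simp [a0, a1, a2, a3, a4]
    have e2 : {i : Fin 5 | f z ∈ B i} = ({0} : Set (Fin 5)) := by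
      ext i; fin_cases i <;> simp [b0, b1, b2, b3, b4]
    rw [e1, e2]; simp [allowedPatternsMinus]
  · exact absurd b1 (H2 (Or.inl a0)).1
  · have e1 : {i : Fin 5 | z ∈ B i} = ({0} : Set (Fin 5)) := by
      ext i; fin_cases i <;> simp [a0, a1, a2, a3, a4]
    have e2 : {i : Fin 5 | f z ∈ B i} = ({2} : Set (Fin 5)) := by
      ext i; fin_cases i <;> simp [b0, b1, b2, b3, b4]
    rw [e1, e2]; simp [allowedPatternsMinus]
  · exact absurd b3 (H2 (Or.inl a0)).2
  · exact absurd b4 (H5 ⟨a0, a2⟩)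
  · have e1 : {i : Fin 5 | z ∈ B i} = ({0} : Set (Fin 5)) := by
      ext i; fin_cases i <;> simp [a0, a1, a2, a3, a4]
    have e2 : {i : Fin 5 | f z ∈ B i} = ({0, 2} : Set (Fin 5)) := by
      ext i; fin_cases i <;> simp [b0, b1, b2, b3, b4]
    rw [e1, e2]; simp [allowedPatternsMinus]
  · exact absurd b1 (H2 (Or.inl a0)).1
  · exact absurd b4 (H5 ⟨a0, a2⟩)
  · exact absurd b3 (H2 (Or.inl a0)).2
  · have e1 : {i : Fin 5 | z ∈ B i} = ({1} : Set (Fin 5)) := by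
      ext i; fin_cases i <;> simp [a0, a1, a2, a3, a4]
    have e2 : {i : Fin 5 | f z ∈ B i} = ({0} : Set (Fin 5)) := by
      ext i; fin_cases i <;> simp [b0, b1, b2, b3, b4]
    rw [e1, e2]; simp [allowedPatternsMinus]
  · exact absurd b1 (H2 (Or.inr a1)).1
  · have e1 : {i : Fin 5 | z ∈ B i} = ({1} : Set (Fin 5)) := by
      ext i; fin_cases i <;> simp [a0, a1, a2, a3, a4]
    have e2 : {i : Fin 5 | f z ∈ B i} = ({2} : Set (Fin 5)) := by
      ext i; fin_cases i <;> simp [b0, b1, b2, b3, b4]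
    rw [e1, e2]; simp [allowedPatternsMinus]
  · exact absurd b3 (H2 (Or.inr a1)).2
  · exact absurd b4 (H6 ⟨a1, a3⟩)
  · have e1 : {i : Fin 5 | z ∈ B i} = ({1} : Set (Fin 5)) := by
      ext i; fin_cases i <;> simp [a0, a1, a2, a3, a4]
    have e2 : {i : Fin 5 | f z ∈ B i} = ({0, 2} : Set (Fin 5)) := by
      ext i; fin_cases i <;> simp [b0, b1, b2, b3, b4]
    rw [e1, e2]; simp [allowedPatternsMinus]
  · exact absurd b1 (H2 (Or.inr a1)).1
  · exact absurd b4 (H6 ⟨a1, a3⟩)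
  · exact absurd b3 (H2 (Or.inr a1)).2
  · exact absurd b0 (H3 (Or.inl a2)).1
  · exact absurd b1 (H3 (Or.inl a2)).2
  · exact absurd b2 (H7 ⟨a2, a0, a4⟩).1
  · exact absurd b3 (H7 ⟨a2, a0, a4⟩).2
  · have e1 : {i : Fin 5 | z ∈ B i} = ({2} : Set (Fin 5)) := by
      ext i; fin_cases i <;> simp [a0, a1, a2, a3, a4]
    have e2 : {i : Fin 5 | f z ∈ B i} = ({4} : Set (Fin 5)) := by
      ext i; fin_cases i <;> simp [b0, b1, b2, b3, b4]
    rw [e1, e2]; simp [allowedPatternsMinus]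
  · exact absurd b0 (H3 (Or.inl a2)).1
  · exact absurd b1 (H3 (Or.inl a2)).2
  · exact absurd b2 (H7 ⟨a2, a0, a4⟩).1
  · exact absurd b3 (H7 ⟨a2, a0, a4⟩).2
  · exact absurd b0 (H3 (Or.inr a3)).1
  · exact absurd b1 (H3 (Or.inr a3)).2
  · exact absurd b2 (H8 ⟨a3, a1, a4⟩).1
  · exact absurd b3 (H8 ⟨a3, a1, a4⟩).2
  · have e1 : {i : Fin 5 | z ∈ B i} = ({3} : Set (Fin 5)) := by
      ext i; fin_cases i <;> simp [a0, a1, a2, a3, a4]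
    have e2 : {i : Fin 5 | f z ∈ B i} = ({4} : Set (Fin 5)) := by
      ext i; fin_cases i <;> simp [b0, b1, b2, b3, b4]
    rw [e1, e2]; simp [allowedPatternsMinus]
  · exact absurd b0 (H3 (Or.inr a3)).1
  · exact absurd b1 (H3 (Or.inr a3)).2
  · exact absurd b2 (H8 ⟨a3, a1, a4⟩).1
  · exact absurd b3 (H8 ⟨a3, a1, a4⟩).2
  · exact absurd b0 (H4 a4).1
  · have e1 : {i : Fin 5 | z ∈ B i} = ({4} : Set (Fin 5)) := by
      ext i; fin_cases i <;> simp [a0, a1, a2, a3, a4]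
    have e2 : {i : Fin 5 | f z ∈ B i} = ({1} : Set (Fin 5)) := by
      ext i; fin_cases i <;> simp [b0, b1, b2, b3, b4]
    rw [e1, e2]; simp [allowedPatternsMinus]
  · exact absurd b2 (H4 a4).2
  · have e1 : {i : Fin 5 | z ∈ B i} = ({4} : Set (Fin 5)) := by
      ext i; fin_cases i <;> simp [a0, a1, a2, a3, a4]
    have e2 : {i : Fin 5 | f z ∈ B i} = ({3} : Set (Fin 5)) := by
      ext i; fin_cases i <;> simp [b0, b1, b2, b3, b4]
    rw [e1, e2]; simp [allowedPatternsMinus]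
  · exact absurd b4 (H9 ⟨a4, a2, a3⟩)
  · exact absurd b0 (H4 a4).1
  · have e1 : {i : Fin 5 | z ∈ B i} = ({4} : Set (Fin 5)) := by
      ext i; fin_cases i <;> simp [a0, a1, a2, a3, a4]
    have e2 : {i : Fin 5 | f z ∈ B i} = ({1, 3} : Set (Fin 5)) := by
      ext i; fin_cases i <;> simp [b0, b1, b2, b3, b4]
    rw [e1, e2]; simp [allowedPatternsMinus]
  · exact absurd b2 (H4 a4).2
  · exact absurd b4 (H9 ⟨a4, a2, a3⟩)
  · exact absurd b0 (H3 (Or.inl a2)).1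
  · exact absurd b1 (H2 (Or.inl a0)).1
  · have e1 : {i : Fin 5 | z ∈ B i} = ({0, 2} : Set (Fin 5)) := by
      ext i; fin_cases i <;> simp [a0, a1, a2, a3, a4]
    have e2 : {i : Fin 5 | f z ∈ B i} = ({2} : Set (Fin 5)) := by
      ext i; fin_cases i <;> simp [b0, b1, b2, b3, b4]
    rw [e1, e2]; simp [allowedPatternsMinus]
  · exact absurd b3 (H2 (Or.inl a0)).2
  · have e1 : {i : Fin 5 | z ∈ B i} = ({0, 2} : Set (Fin 5)) := by
      ext i; fin_cases i <;> simp [a0, a1, a2, a3, a4]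
    have e2 : {i : Fin 5 | f z ∈ B i} = ({4} : Set (Fin 5)) := by
      ext i; fin_cases i <;> simp [b0, b1, b2, b3, b4]
    rw [e1, e2]; simp [allowedPatternsMinus]
  · exact absurd b0 (H3 (Or.inl a2)).1
  · exact absurd b1 (H2 (Or.inl a0)).1
  · have e1 : {i : Fin 5 | z ∈ B i} = ({0, 2} : Set (Fin 5)) := by
      ext i; fin_cases i <;> simp [a0, a1, a2, a3, a4]
    have e2 : {i : Fin 5 | f z ∈ B i} = ({2, 4} : Set (Fin 5)) := by
      ext i; fin_cases i <;> simp [b0, b1, b2, b3, b4]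
    rw [e1, e2]; simp [allowedPatternsMinus]
  · exact absurd b3 (H2 (Or.inl a0)).2
  · exact absurd b0 (H3 (Or.inr a3)).1
  · exact absurd b1 (H2 (Or.inr a1)).1
  · have e1 : {i : Fin 5 | z ∈ B i} = ({1, 3} : Set (Fin 5)) := by
      ext i; fin_cases i <;> simp [a0, a1, a2, a3, a4]
    have e2 : {i : Fin 5 | f z ∈ B i} = ({2} : Set (Fin 5)) := by
      ext i; fin_cases i <;> simp [b0, b1, b2, b3, b4]
    rw [e1, e2]; simp [allowedPatternsMinus]
  · exact absurd b3 (H2 (Or.inr a1)).2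
  · have e1 : {i : Fin 5 | z ∈ B i} = ({1, 3} : Set (Fin 5)) := by
      ext i; fin_cases i <;> simp [a0, a1, a2, a3, a4]
    have e2 : {i : Fin 5 | f z ∈ B i} = ({4} : Set (Fin 5)) := by
      ext i; fin_cases i <;> simp [b0, b1, b2, b3, b4]
    rw [e1, e2]; simp [allowedPatternsMinus]
  · exact absurd b0 (H3 (Or.inr a3)).1
  · exact absurd b1 (H2 (Or.inr a1)).1
  · have e1 : {i : Fin 5 | z ∈ B i} = ({1, 3} : Set (Fin 5)) := by
      ext i; fin_cases i <;> simp [a0, a1, a2, a3, a4]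
    have e2 : {i : Fin 5 | f z ∈ B i} = ({2, 4} : Set (Fin 5)) := by
      ext i; fin_cases i <;> simp [b0, b1, b2, b3, b4]
    rw [e1, e2]; simp [allowedPatternsMinus]
  · exact absurd b3 (H2 (Or.inr a1)).2
  · exact absurd b0 (H3 (Or.inl a2)).1
  · exact absurd b1 (H3 (Or.inl a2)).2
  · exact absurd b2 (H4 a4).2
  · have e1 : {i : Fin 5 | z ∈ B i} = ({2, 4} : Set (Fin 5)) := by
      ext i; fin_cases i <;> simp [a0, a1, a2, a3, a4]
    have e2 : {i : Fin 5 | f z ∈ B i} = ({3} : Set (Fin 5)) := by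
      ext i; fin_cases i <;> simp [b0, b1, b2, b3, b4]
    rw [e1, e2]; simp [allowedPatternsMinus]
  · have e1 : {i : Fin 5 | z ∈ B i} = ({2, 4} : Set (Fin 5)) := by
      ext i; fin_cases i <;> simp [a0, a1, a2, a3, a4]
    have e2 : {i : Fin 5 | f z ∈ B i} = ({4} : Set (Fin 5)) := by
      ext i; fin_cases i <;> simp [b0, b1, b2, b3, b4]
    rw [e1, e2]; simp [allowedPatternsMinus]
  · exact absurd b0 (H3 (Or.inl a2)).1
  · exact absurd b1 (H3 (Or.inl a2)).2
  · exact absurd b2 (H4 a4).2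
  · have e1 : {i : Fin 5 | z ∈ B i} = ({2, 4} : Set (Fin 5)) := by
      ext i; fin_cases i <;> simp [a0, a1, a2, a3, a4]
    have e2 : {i : Fin 5 | f z ∈ B i} = ({3, 4} : Set (Fin 5)) := by
      ext i; fin_cases i <;> simp [b0, b1, b2, b3, b4]
    rw [e1, e2]; simp [allowedPatternsMinus]
  · exact absurd b0 (H3 (Or.inr a3)).1
  · exact absurd b1 (H3 (Or.inr a3)).2
  · exact absurd b2 (H4 a4).2
  · have e1 : {i : Fin 5 | z ∈ B i} = ({3, 4} : Set (Fin 5)) := by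
      ext i; fin_cases i <;> simp [a0, a1, a2, a3, a4]
    have e2 : {i : Fin 5 | f z ∈ B i} = ({3} : Set (Fin 5)) := by
      ext i; fin_cases i <;> simp [b0, b1, b2, b3, b4]
    rw [e1, e2]; simp [allowedPatternsMinus]
  · have e1 : {i : Fin 5 | z ∈ B i} = ({3, 4} : Set (Fin 5)) := by
      ext i; fin_cases i <;> simp [a0, a1, a2, a3, a4]
    have e2 : {i : Fin 5 | f z ∈ B i} = ({4} : Set (Fin 5)) := by
      ext i; fin_cases i <;> simp [b0, b1, b2, b3, b4]
    rw [e1, e2]; simp [allowedPatternsMinus]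
  · exact absurd b0 (H3 (Or.inr a3)).1
  · exact absurd b1 (H3 (Or.inr a3)).2
  · exact absurd b2 (H4 a4).2
  · have e1 : {i : Fin 5 | z ∈ B i} = ({3, 4} : Set (Fin 5)) := by
      ext i; fin_cases i <;> simp [a0, a1, a2, a3, a4]
    have e2 : {i : Fin 5 | f z ∈ B i} = ({3, 4} : Set (Fin 5)) := by
      ext i; fin_cases i <;> simp [b0, b1, b2, b3, b4]
    rw [e1, e2]; simp [allowedPatternsMinus]
end

section
/- Let X and Y be Hausdorff topological spaces, let D ⊆ X be an open set whose closure is compact, let E ⊆ Y be a subset that is locally compact in the subspace topology, and let A ⊆ D × E be a set that is closed in the subspace topology of D × E ⊆ X × Y. Then the restriction to A of the projection (x, y) ↦ y is proper — that is, for every compact K ⊆ E the set A ∩ (X × K) is compact — if and only if the closure of A taken in X × Y is disjoint from (∂D) × E, where ∂D denotes the topological frontier of D in X. -/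
/-- Lemma A.1 of the paper: for `D ⊆ X` open with compact closure, `E ⊆ Y` locally
compact, and `A ⊆ D × E` closed in the subspace topology of `D × E`, the projection
`(x, y) ↦ y` restricted to `A` is proper iff the closure of `A` in `X × Y` is disjoint
from `∂D × E`. -/
theorem proper_projection_criterion {X Y : Type*} [TopologicalSpace X] [TopologicalSpace Y]
    [T2Space X] [T2Space Y]
    (D : Set X) (hDopen : IsOpen D) (hDcpt : IsCompact (closure D))
    (E : Set Y) (hE : LocallyCompactSpace E)
    (A : Set (X × Y)) (hAsub : A ⊆ D ×ˢ E)
    (hAclosed : IsClosed {p : ↥(D ×ˢ E) | (p : X × Y) ∈ A}) :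
    (∀ K : Set Y, K ⊆ E → IsCompact K → IsCompact (A ∩ Set.univ ×ˢ K)) ↔
      Disjoint (closure A) (frontier D ×ˢ E) := by
  haveI := hE
  obtain ⟨C, hCclosed, hC⟩ := isClosed_induced_iff.mp hAclosed
  have hAC : A ⊆ C := fun a ha => by
    have : (⟨a, hAsub ha⟩ : ↥(D ×ˢ E)) ∈ Subtype.val ⁻¹' C := by
      rw [hC]; exact ha
    exact this
  have hkey : closure A ∩ (D ×ˢ E) ⊆ A := by
    rintro p ⟨hp1, hp2⟩
    have : (⟨p, hp2⟩ : ↥(D ×ˢ E)) ∈ Subtype.val ⁻¹' C :=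
      closure_minimal hAC hCclosed hp1
    rw [hC] at this; exact this
  constructor
  · intro h
    rw [Set.disjoint_left]
    rintro ⟨x, y⟩ hpcl ⟨hxF, hyE⟩
    obtain ⟨K', hK'cpt, hK'nhds⟩ := exists_compact_mem_nhds (⟨y, hyE⟩ : E)
    set K : Set Y := Subtype.val '' K' with hK
    have hKE : K ⊆ E := by rintro _ ⟨k, _, rfl⟩; exact k.2
    have hKcpt : IsCompact K := hK'cpt.image continuous_subtype_val
    have hcpt := h K hKE hKcpt
    rw [nhds_induced] at hK'nhds
    obtain ⟨U, hU, hUK⟩ := hK'nhds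
    have hmem : (x, y) ∈ closure (A ∩ Set.univ ×ˢ K) := by
      rw [mem_closure_iff_nhds] at hpcl ⊢
      intro t ht
      have hnt : t ∩ (Set.univ ×ˢ U) ∈ nhds (x, y) :=
        Filter.inter_mem ht (prod_mem_nhds Filter.univ_mem hU)
      obtain ⟨q, ⟨hqt, -, hqU⟩, hqA⟩ := hpcl _ hnt
      refine ⟨q, hqt, hqA, trivial, ?_⟩
      have hq2E : q.2 ∈ E := (hAsub hqA).2
      exact ⟨⟨q.2, hq2E⟩, hUK hqU, rfl⟩
    rw [hcpt.isClosed.closure_eq] at hmem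
    have hxD : x ∈ D := (hAsub hmem.1).1
    rw [hDopen.frontier_eq] at hxF
    exact hxF.2 hxD
  · intro hdisj K hKE hKcpt
    have hsub : A ∩ Set.univ ×ˢ K ⊆ closure D ×ˢ K := by
      rintro p ⟨hpA, -, hpK⟩
      exact ⟨subset_closure (hAsub hpA).1, hpK⟩
    refine IsCompact.of_isClosed_subset (hDcpt.prod hKcpt) ?_ hsub
    apply isClosed_of_closure_subset
    rintro ⟨x, y⟩ hp
    have hpA : (x, y) ∈ closure A := closure_mono Set.inter_subset_left hp
    have hpK : (x, y) ∈ closure (Set.univ ×ˢ K) :=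
      closure_mono Set.inter_subset_right hp
    rw [closure_prod_eq] at hpK
    have hyK : y ∈ K := by
      have := hpK.2
      rwa [hKcpt.isClosed.closure_eq] at this
    have hyE : y ∈ E := hKE hyK
    have hxcl : x ∈ closure D := by
      have h1 : (x, y) ∈ closure (D ×ˢ E) := closure_mono hAsub hpA
      rw [closure_prod_eq] at h1
      exact h1.1
    have hxD : x ∈ D := by
      by_contra hx
      exact Set.disjoint_left.mp hdisj hpA
        ⟨by rw [hDopen.frontier_eq]; exact ⟨hxcl, hx⟩, hyE⟩
    exact ⟨hkey ⟨hpA, hxD, hyE⟩, trivial, hyK⟩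
end
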